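/- arXiv:1606.01496 — 2 statements merged into one kernel-verified Lean document; each statement's English description precedes it below -/
import Mathlib

section
/- Let K_n be the complete graph on n ≥ 2 vertices and x any vertex. Then for all N ∈ (0,∞], K_{K_n,x}(N) = (n+2)/2 - 2(n-1)/N. -/
open Finset Filter Topology ENNReal SimpleGraph

noncomputable instance (priority := low) finLocFin {V : Type*} [Finite V] (G : SimpleGraph V) :
    G.LocallyFinite := fun _ => Fintype.ofFinite _

/-- Non-normalized graph Laplacian. -/
noncomputable def lap {V : Type*} (G : SimpleGraph V) [G.LocallyFinite] (f : V → ℝ) (x : V) : ℝ :=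
  ∑ y ∈ G.neighborFinset x, (f y - f x)

/-- Bakry–Émery Γ operator. -/
noncomputable def gam {V : Type*} (G : SimpleGraph V) [G.LocallyFinite] (f g : V → ℝ) (x : V) : ℝ :=
  (lap G (fun v => f v * g v) x - f x * lap G g x - g x * lap G f x) / 2

/-- Bakry–Émery Γ₂ operator. -/
noncomputable def gam2 {V : Type*} (G : SimpleGraph V) [G.LocallyFinite] (f g : V → ℝ) (x : V) : ℝ :=
  (lap G (gam G f g) x - gam G f (lap G g) x - gam G (lap G f) g x) / 2

/-- The coefficient 1/N for N ∈ (0,∞], with 1/∞ = 0. -/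
noncomputable def invN (N : ℝ≥0∞) : ℝ := (N⁻¹).toReal

/-- The vertex `x` satisfies the curvature-dimension inequality CD(K,N). -/
def CD {V : Type*} (G : SimpleGraph V) [G.LocallyFinite] (K : ℝ) (N : ℝ≥0∞) (x : V) : Prop :=
  ∀ f : V → ℝ, gam2 G f f x ≥ invN N * (lap G f x) ^ 2 + K * gam G f f x

lemma gam_eq {V : Type*} (G : SimpleGraph V) [G.LocallyFinite] (f g : V → ℝ) (x : V) :
    gam G f g x = (∑ y ∈ G.neighborFinset x, (f y - f x) * (g y - g x)) / 2 := by
  unfold gam lap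
  rw [Finset.mul_sum, Finset.mul_sum, ← Finset.sum_sub_distrib, ← Finset.sum_sub_distrib]
  congr 1
  exact Finset.sum_congr rfl fun y _ => by ring

lemma gam_comm {V : Type*} (G : SimpleGraph V) [G.LocallyFinite] (f g : V → ℝ) (x : V) :
    gam G f g x = gam G g f x := by
  rw [gam_eq, gam_eq]
  congr 1
  exact Finset.sum_congr rfl fun y _ => by ring

lemma nbr_top {n : ℕ} (x : Fin n) :
    (⊤ : SimpleGraph (Fin n)).neighborFinset x = Finset.univ.erase x := by
  ext y
  simp [SimpleGraph.mem_neighborFinset, ne_comm]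

lemma lap_top {n : ℕ} (f : Fin n → ℝ) (x : Fin n) :
    lap ⊤ f x = ∑ y, (f y - f x) := by
  unfold lap
  rw [nbr_top]
  exact Finset.sum_erase _ (by simp)

lemma gam_top {n : ℕ} (f g : Fin n → ℝ) (x : Fin n) :
    gam ⊤ f g x = (∑ y, (f y - f x) * (g y - g x)) / 2 := by
  rw [gam_eq, nbr_top]
  congr 1
  exact Finset.sum_erase _ (by simp)

lemma sum_sub_const {n : ℕ} (f : Fin n → ℝ) (c : ℝ) :
    ∑ y, (f y - c) = (∑ y, f y) - n * c := by
  rw [Finset.sum_sub_distrib, Finset.sum_const, Finset.card_univ, Fintype.card_fin,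
    nsmul_eq_mul]

lemma sum_sub_sq {n : ℕ} (f : Fin n → ℝ) (c : ℝ) :
    ∑ y, (f y - c) ^ 2 = (∑ y, f y ^ 2) - 2 * c * (∑ y, f y) + n * c ^ 2 := by
  have : ∀ y : Fin n, (f y - c) ^ 2 = f y ^ 2 - 2 * c * f y + c ^ 2 := fun y => by ring
  simp_rw [this]
  rw [Finset.sum_add_distrib, Finset.sum_sub_distrib, ← Finset.mul_sum, Finset.sum_const,
    Finset.card_univ, Fintype.card_fin, nsmul_eq_mul]

lemma lap_top_eq {n : ℕ} (f : Fin n → ℝ) (x : Fin n) :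
    lap ⊤ f x = (∑ y, f y) - n * f x := by
  rw [lap_top, sum_sub_const]

lemma gam_top_self {n : ℕ} (f : Fin n → ℝ) (x : Fin n) :
    gam ⊤ f f x = (∑ y, (f y - f x) ^ 2) / 2 := by
  rw [gam_top]
  congr 1
  exact Finset.sum_congr rfl fun y _ => (sq _).symm

lemma gam2_top {n : ℕ} (f : Fin n → ℝ) (x : Fin n) :
    gam2 ⊤ f f x = (3 * n / 4) * (∑ y, (f y - f x) ^ 2)
      - (∑ y, (f y - f x)) ^ 2 / 2 := by
  set T := ∑ y, f y with hT
  set U := ∑ y, f y ^ 2 with hU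
  unfold gam2
  rw [gam_comm ⊤ (lap ⊤ f) f x]
  have hglf : gam ⊤ f (lap ⊤ f) x = -(n : ℝ) / 2 * (U - 2 * f x * T + n * f x ^ 2) := by
    rw [gam_top]
    have : ∀ y : Fin n, (f y - f x) * (lap ⊤ f y - lap ⊤ f x)
        = -(n : ℝ) * (f y - f x) ^ 2 := by
      intro y
      rw [lap_top_eq, lap_top_eq]
      ring
    simp_rw [this]
    rw [← Finset.mul_sum, sum_sub_sq]
    ring
  have hlg : lap ⊤ (gam ⊤ f f) x = (n : ℝ) * U - T ^ 2
      - (n : ℝ) / 2 * (U - 2 * f x * T + n * f x ^ 2) := by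
    rw [lap_top]
    have : ∀ y : Fin n, gam ⊤ f f y - gam ⊤ f f x
        = (U - 2 * f y * T + n * f y ^ 2) / 2 - (U - 2 * f x * T + n * f x ^ 2) / 2 := by
      intro y
      rw [gam_top_self, gam_top_self, sum_sub_sq, sum_sub_sq]
    simp_rw [this]
    rw [Finset.sum_sub_distrib, Finset.sum_const, Finset.card_univ, Fintype.card_fin,
      nsmul_eq_mul]
    have h1 : ∑ y, (U - 2 * f y * T + n * f y ^ 2) / 2
        = (n : ℝ) * (U / 2) + (-T) * T + ((n : ℝ) / 2) * U := by
      have e : ∀ y : Fin n, (U - 2 * f y * T + n * f y ^ 2) / 2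
          = U / 2 + (-T) * f y + ((n : ℝ) / 2) * f y ^ 2 := fun y => by ring
      simp_rw [e]
      rw [Finset.sum_add_distrib, Finset.sum_add_distrib, ← Finset.mul_sum, ← Finset.mul_sum,
        Finset.sum_const, Finset.card_univ, Fintype.card_fin, nsmul_eq_mul]
    rw [h1]
    ring
  rw [hlg, hglf, sum_sub_sq, sum_sub_const]
  ring

theorem stmt_12 (n : ℕ) (hn : 2 ≤ n) (x : Fin n) :
    ∀ N : ℝ≥0∞, 0 < N →
      IsGreatest {K : ℝ | CD (⊤ : SimpleGraph (Fin n)) K N x}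
        (((n : ℝ) + 2) / 2 - 2 * ((n : ℝ) - 1) * invN N) := by
  intro N hN
  set c := invN N with hc
  have hc0 : 0 ≤ c := ENNReal.toReal_nonneg
  have hn1 : (1:ℝ) ≤ (n:ℝ) - 1 := by
    have : (2:ℝ) ≤ (n:ℝ) := by exact_mod_cast hn
    linarith
  constructor
  · intro f
    rw [gam2_top, gam_top_self, lap_top]
    set S := ∑ y, (f y - f x) with hS
    set Q := ∑ y, (f y - f x) ^ 2 with hQ
    have hCS : S ^ 2 ≤ ((n:ℝ) - 1) * Q := by
      have h1 : S = ∑ y ∈ Finset.univ.erase x, (f y - f x) :=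
        (Finset.sum_erase _ (by simp)).symm
      have h2 : Q = ∑ y ∈ Finset.univ.erase x, (f y - f x) ^ 2 :=
        (Finset.sum_erase _ (by simp)).symm
      have h3 := sq_sum_le_card_mul_sum_sq (s := Finset.univ.erase x)
        (f := fun y => f y - f x)
      rw [Finset.card_erase_of_mem (Finset.mem_univ x), Finset.card_univ,
        Fintype.card_fin] at h3
      have h4 : ((n - 1 : ℕ) : ℝ) = (n:ℝ) - 1 := by
        rw [Nat.cast_sub (by omega)]; norm_num
      rw [h1, h2]
      rw [h4] at h3
      exact h3
    nlinarith [mul_nonneg hc0 (sub_nonneg.mpr hCS), hCS]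
  · intro K hK
    set g : Fin n → ℝ := fun y => if y = x then 0 else 1 with hg
    have h := hK g
    rw [gam2_top, gam_top_self, lap_top] at h
    have hgx : g x = 0 := if_pos rfl
    have key : ∀ y : Fin n, g y - g x = if y = x then 0 else 1 := by
      intro y
      rw [hgx, sub_zero]
    have esum : (∑ y : Fin n, if y = x then (0:ℝ) else 1) = (n:ℝ) - 1 := by
      have e : ∀ y : Fin n, (if y = x then (0:ℝ) else 1) = 1 - (if y = x then 1 else 0) :=
        fun y => by split <;> norm_num
      simp_rw [e]
      rw [Finset.sum_sub_distrib, Finset.sum_const,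
        Finset.sum_ite_eq' Finset.univ x (fun _ => (1:ℝ)), if_pos (Finset.mem_univ x),
        Finset.card_univ, Fintype.card_fin, nsmul_eq_mul, mul_one]
    have key2 : ∀ y : Fin n, (g y - g x) ^ 2 = if y = x then 0 else 1 := by
      intro y
      rw [key]
      split <;> norm_num
    simp_rw [key2, key, esum] at h
    have h2 : K * (((n:ℝ) - 1) / 2)
        ≤ (((n:ℝ) + 2) / 2 - 2 * ((n:ℝ) - 1) * c) * (((n:ℝ) - 1) / 2) := by
      nlinarith [h]
    have hpos : (0:ℝ) < ((n:ℝ) - 1) / 2 := by linarith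
    exact le_of_mul_le_mul_right h2 hpos
end

section
/- Let G₁, G₂ be locally finite simple graphs, x ∈ V₁, y ∈ V₂, and N₁, N₂ ∈ (0,∞]. Then K_{G₁×G₂,(x,y)}(N₁+N₂) ≤ max{K_{G₁,x}(N₁), K_{G₂,y}(N₂)}. -/
open Finset Filter Topology ENNReal SimpleGraph

/-
The curvature-dimension inequality at `x` says that the defect
`Γ₂(f) - (1/N) (Δf)² - K Γ(f)` is nonnegative for every `f`; the defect is quadratically
homogeneous in `f`. On `G □ H` the operators `Δ`, `Γ` and `Γ₂` split over functions of the form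
`F(u,v) = f₁(u) + f₂(v)`. If `K` exceeded both curvatures, pick `f₁`, `f₂` with negative defects and
rescale them, not both to zero, so that `ΔF(x,y)²/(N₁+N₂) ≥ (Δf₁)²/N₁ + (Δf₂)²/N₂`; then the defect
of `F` at `(x,y)` is at most the sum of the two rescaled defects, which is negative.
-/

section Homogeneity

variable {V : Type*} (G : SimpleGraph V) [G.LocallyFinite]

lemma gam_eq_sum (f g : V → ℝ) (x : V) :
    gam G f g x = (∑ z ∈ G.neighborFinset x, (f z - f x) * (g z - g x)) / 2 := by
  unfold gam lap
  rw [mul_sum, mul_sum, ← sum_sub_distrib, ← sum_sub_distrib]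
  exact congrArg (· / 2) (sum_congr rfl fun z _ => by ring)

lemma lap_smul (c : ℝ) (f : V → ℝ) : lap G (c • f) = c • lap G f := by
  funext x
  simp only [lap, Pi.smul_apply, smul_eq_mul, mul_sum, mul_sub]

lemma gam_smul (c d : ℝ) (f g : V → ℝ) : gam G (c • f) (d • g) = (c * d) • gam G f g := by
  funext x
  simp only [gam_eq_sum, Pi.smul_apply, smul_eq_mul, mul_sum, ← mul_div_assoc]
  exact congrArg (· / 2) (sum_congr rfl fun z _ => by ring)

lemma gam2_smul (c : ℝ) (f : V → ℝ) (x : V) :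
    gam2 G (c • f) (c • f) x = c ^ 2 * gam2 G f f x := by
  simp only [gam2, gam_smul, lap_smul, Pi.smul_apply, smul_eq_mul]
  ring

end Homogeneity

noncomputable def cdDefect {V : Type*} (G : SimpleGraph V) [G.LocallyFinite] (K : ℝ) (N : ℝ≥0∞)
    (f : V → ℝ) (x : V) : ℝ :=
  gam2 G f f x - (invN N * lap G f x ^ 2 + K * gam G f f x)

section Defect

variable {V : Type*} (G : SimpleGraph V) [G.LocallyFinite] (K : ℝ) (N : ℝ≥0∞)

lemma cd_iff_forall_cdDefect_nonneg (x : V) : CD G K N x ↔ ∀ f, 0 ≤ cdDefect G K N f x :=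
  forall_congr' fun _ => sub_nonneg.symm

lemma cdDefect_smul (c : ℝ) (f : V → ℝ) (x : V) :
    cdDefect G K N (c • f) x = c ^ 2 * cdDefect G K N f x := by
  simp only [cdDefect, gam2_smul, gam_smul, lap_smul, Pi.smul_apply, smul_eq_mul]
  ring

end Defect

def boxSum {V₁ V₂ : Type*} (f₁ : V₁ → ℝ) (f₂ : V₂ → ℝ) : V₁ × V₂ → ℝ :=
  fun p => f₁ p.1 + f₂ p.2

section BoxProduct

variable {V₁ V₂ : Type*} (G : SimpleGraph V₁) (H : SimpleGraph V₂)
  [G.LocallyFinite] [H.LocallyFinite] [(G □ H).LocallyFinite]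

lemma sum_neighborFinset_boxProd (φ : V₁ × V₂ → ℝ) (p : V₁ × V₂) :
    ∑ q ∈ (G □ H).neighborFinset p, φ q
      = ∑ u ∈ G.neighborFinset p.1, φ (u, p.2) + ∑ v ∈ H.neighborFinset p.2, φ (p.1, v) := by
  simp only [neighborFinset_boxProd, sum_disjUnion, sum_product, sum_singleton]

lemma lap_boxSum (f₁ : V₁ → ℝ) (f₂ : V₂ → ℝ) :
    lap (G □ H) (boxSum f₁ f₂) = boxSum (lap G f₁) (lap H f₂) := by
  funext p
  simp only [lap, boxSum, sum_neighborFinset_boxProd, add_sub_add_right_eq_sub,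
    add_sub_add_left_eq_sub]

lemma gam_boxSum (f₁ g₁ : V₁ → ℝ) (f₂ g₂ : V₂ → ℝ) :
    gam (G □ H) (boxSum f₁ f₂) (boxSum g₁ g₂) = boxSum (gam G f₁ g₁) (gam H f₂ g₂) := by
  funext p
  simp only [gam_eq_sum, boxSum, sum_neighborFinset_boxProd, add_sub_add_right_eq_sub,
    add_sub_add_left_eq_sub, add_div]

lemma gam2_boxSum (f₁ g₁ : V₁ → ℝ) (f₂ g₂ : V₂ → ℝ) :
    gam2 (G □ H) (boxSum f₁ f₂) (boxSum g₁ g₂) = boxSum (gam2 G f₁ g₁) (gam2 H f₂ g₂) := by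
  funext p
  simp only [gam2, gam_boxSum, lap_boxSum, boxSum]
  ring

lemma cdDefect_boxSum_le (K : ℝ) (N₁ N₂ : ℝ≥0∞) (f₁ : V₁ → ℝ) (f₂ : V₂ → ℝ) (x : V₁) (y : V₂)
    (hdim : invN N₁ * lap G f₁ x ^ 2 + invN N₂ * lap H f₂ y ^ 2
      ≤ invN (N₁ + N₂) * (lap G f₁ x + lap H f₂ y) ^ 2) :
    cdDefect (G □ H) K (N₁ + N₂) (boxSum f₁ f₂) (x, y)
      ≤ cdDefect G K N₁ f₁ x + cdDefect H K N₂ f₂ y := by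
  simp only [cdDefect, gam2_boxSum, gam_boxSum, lap_boxSum, boxSum]
  linarith

end BoxProduct

lemma invN_eq_inv_toReal (N : ℝ≥0∞) : invN N = N.toReal⁻¹ := by
  rw [invN, toReal_inv]

lemma exists_invN_mul_sq_add_le (N₁ N₂ : ℝ≥0∞) (hN₁ : 0 < N₁) (hN₂ : 0 < N₂) (L₁ L₂ : ℝ) :
    ∃ c₁ c₂ : ℝ, (c₁ ≠ 0 ∨ c₂ ≠ 0) ∧
      invN N₁ * (c₁ * L₁) ^ 2 + invN N₂ * (c₂ * L₂) ^ 2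
        ≤ invN (N₁ + N₂) * (c₁ * L₁ + c₂ * L₂) ^ 2 := by
  rcases eq_or_ne N₁ ⊤ with h₁ | h₁
  · exact ⟨1, 0, Or.inl one_ne_zero, by simp [h₁, invN]⟩
  rcases eq_or_ne N₂ ⊤ with h₂ | h₂
  · exact ⟨0, 1, Or.inr one_ne_zero, by simp [h₂, invN]⟩
  rcases eq_or_ne L₁ 0 with hL₁ | hL₁
  · exact ⟨1, 0, Or.inl one_ne_zero, by simp [hL₁]⟩
  rcases eq_or_ne L₂ 0 with hL₂ | hL₂
  · exact ⟨0, 1, Or.inr one_ne_zero, by simp [hL₂]⟩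
  have hn₁ : 0 < N₁.toReal := toReal_pos hN₁.ne' h₁
  have hn₂ : 0 < N₂.toReal := toReal_pos hN₂.ne' h₂
  -- `cᵢ Lᵢ = Nᵢ` is the equality case of `(a + b)² / (N₁ + N₂) ≤ a² / N₁ + b² / N₂`.
  refine ⟨N₁.toReal / L₁, N₂.toReal / L₂, Or.inl (div_ne_zero hn₁.ne' hL₁), le_of_eq ?_⟩
  rw [div_mul_cancel₀ _ hL₁, div_mul_cancel₀ _ hL₂, invN_eq_inv_toReal, invN_eq_inv_toReal,
    invN_eq_inv_toReal, toReal_add h₁ h₂]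
  field_simp

theorem cd_or_cd_of_cd_boxProd {V₁ V₂ : Type*} (G : SimpleGraph V₁) (H : SimpleGraph V₂)
    [G.LocallyFinite] [H.LocallyFinite] [(G □ H).LocallyFinite] {K : ℝ} {N₁ N₂ : ℝ≥0∞}
    (hN₁ : 0 < N₁) (hN₂ : 0 < N₂) {x : V₁} {y : V₂} (h : CD (G □ H) K (N₁ + N₂) (x, y)) :
    CD G K N₁ x ∨ CD H K N₂ y := by
  simp only [cd_iff_forall_cdDefect_nonneg] at h ⊢
  by_contra! hviol
  obtain ⟨⟨f₁, hf₁⟩, ⟨f₂, hf₂⟩⟩ := hviol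
  obtain ⟨c₁, c₂, hc, hdim⟩ := exists_invN_mul_sq_add_le N₁ N₂ hN₁ hN₂ (lap G f₁ x) (lap H f₂ y)
  have hsplit := cdDefect_boxSum_le G H K N₁ N₂ (c₁ • f₁) (c₂ • f₂) x y
    (by simpa only [lap_smul, Pi.smul_apply, smul_eq_mul] using hdim)
  rw [cdDefect_smul, cdDefect_smul] at hsplit
  have hneg : c₁ ^ 2 * cdDefect G K N₁ f₁ x + c₂ ^ 2 * cdDefect H K N₂ f₂ y < 0 := by
    rcases hc with hc | hc
    · exact add_neg_of_neg_of_nonpos (mul_neg_of_pos_of_neg (by positivity) hf₁)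
        (mul_nonpos_of_nonneg_of_nonpos (sq_nonneg c₂) hf₂.le)
    · exact add_neg_of_nonpos_of_neg (mul_nonpos_of_nonneg_of_nonpos (sq_nonneg c₁) hf₁.le)
        (mul_neg_of_pos_of_neg (by positivity) hf₂)
  linarith [h (boxSum (c₁ • f₁) (c₂ • f₂))]

theorem stmt_18 {V₁ V₂ : Type*} (G : SimpleGraph V₁) (H : SimpleGraph V₂)
    [G.LocallyFinite] [H.LocallyFinite] [(G.boxProd H).LocallyFinite]
    (x : V₁) (y : V₂) (N₁ N₂ : ℝ≥0∞) (hN₁ : 0 < N₁) (hN₂ : 0 < N₂)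
    (k₁ k₂ k : ℝ)
    (hg₁ : IsGreatest {K : ℝ | CD G K N₁ x} k₁)
    (hg₂ : IsGreatest {K : ℝ | CD H K N₂ y} k₂)
    (hg : IsGreatest {K : ℝ | CD (G.boxProd H) K (N₁ + N₂) (x, y)} k) :
    k ≤ max k₁ k₂ := by
  rcases cd_or_cd_of_cd_boxProd G H hN₁ hN₂ hg.1 with h | h
  · exact le_max_of_le_left (hg₁.2 h)
  · exact le_max_of_le_right (hg₂.2 h)
end
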